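/- A valid monolithic DRUP proof certifies unsatisfiability: if π = c₁,…,cₙ is a sequence of steps where each step either asserts a clause or adds a RUP clause with respect to the currently active clauses, and the last step adds the empty clause, then the set of all asserted clauses of π is unsatisfiable. -/

import Mathlib

/-- Propositional variables. -/
abbrev Var := ℕ
/-- A literal is a variable together with a polarity. -/
abbrev Lit := Var × Bool
/-- A clause is a finite set of literals. -/
abbrev Clause := Finset Lit
/-- A total truth assignment. -/
abbrev Assignment := Var → Bool

/-- Negation of a literal. -/
def Lit.neg (l : Lit) : Lit := (l.1, !l.2)

/-- An assignment satisfies a literal. -/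
def satLit (σ : Assignment) (l : Lit) : Prop := σ l.1 = l.2
/-- An assignment satisfies a clause (some literal is true). -/
def satClause (σ : Assignment) (C : Clause) : Prop := ∃ l ∈ C, satLit σ l
/-- An assignment satisfies a set of clauses. -/
def satSet (σ : Assignment) (Γ : Set Clause) : Prop := ∀ C ∈ Γ, satClause σ C
/-- Semantic consequence: every model of Γ satisfies C. -/
def entails (Γ : Set Clause) (C : Clause) : Prop :=
  ∀ σ : Assignment, satSet σ Γ → satClause σ C

/-- Unit-propagation closure: the least set of literals containing the
assumptions `A` and closed under the unit-propagation rule for clauses of `Γ`: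
if all literals of a clause but one are falsified (their negations derived),
the remaining literal is derived. -/
inductive UPC (Γ : Set Clause) (A : Set Lit) : Lit → Prop
  | assm {l : Lit} : l ∈ A → UPC Γ A l
  | prop {C : Clause} {l : Lit} : C ∈ Γ → l ∈ C →
      (∀ l' ∈ C, l' ≠ l → UPC Γ A (Lit.neg l')) → UPC Γ A l

/-- Unit propagation from `Γ` under assumptions `A` reaches a conflict:
some clause of `Γ` has all its literals falsified by the closure. -/
def upConflict (Γ : Set Clause) (A : Set Lit) : Prop :=
  ∃ C ∈ Γ, ∀ l ∈ C, UPC Γ A (Lit.neg l)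

/-- `RUP Γ C` (written `Γ ⊢_UP C`): unit propagation from `Γ` together with the
negations of the literals of `C` reaches a conflict. -/
def RUP (Γ : Set Clause) (C : Clause) : Prop :=
  upConflict Γ {l | ∃ m ∈ C, l = Lit.neg m}

/-- A step of a monolithic DRUP proof. -/
inductive Step
  | asserted (c : Clause)
  | rup (c : Clause)
  | del (c : Clause)
deriving DecidableEq

/-- The active clauses of a sequence of steps: added (asserted or rup)
and not subsequently deleted. -/
def active (π : List Step) : Set Clause :=
  {c | ∃ i, ∃ hi : i < π.length,
      ((π[i]'hi) = Step.asserted c ∨ (π[i]'hi) = Step.rup c) ∧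
      ∀ k, ∀ hk : k < π.length, i < k → (π[k]'hk) ≠ Step.del c}

/-- All clauses asserted in a monolithic DRUP proof. -/
def allassertedMono (π : List Step) : Set Clause := {c | Step.asserted c ∈ π}

/-- Validity of a monolithic DRUP proof: each rup step is a reverse unit
propagation consequence of the currently active clauses, and the last
step adds the empty clause. -/
def validMono (π : List Step) : Prop :=
  (∀ i, ∀ hi : i < π.length, ∀ c : Clause,
      (π[i]'hi) = Step.rup c → RUP (active (π.take i)) c) ∧
  ∃ hne : π ≠ [], π.getLast hne = Step.rup ∅ ∨ π.getLast hne = Step.asserted ∅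

/-!
Unit propagation is sound: under a model of `Γ` and of the assumptions, every propagated literal
is true, so a conflict refutes the negation of a RUP clause, i.e. RUP clauses are entailed.
By strong induction along the proof, any model of the asserted clauses therefore satisfies the
active clauses of every prefix. The final step makes `∅` active, and `∅` has no model.
-/

theorem satLit_neg_iff {σ : Assignment} {l : Lit} : satLit σ l.neg ↔ ¬ satLit σ l := by
  obtain ⟨v, b⟩ := l
  cases b <;> cases h : σ v <;> simp [satLit, Lit.neg, h]

theorem not_satClause_empty (σ : Assignment) : ¬ satClause σ ∅ := by
  simp [satClause]

theorem UPC.satLit {Γ : Set Clause} {A : Set Lit} {σ : Assignment} (hΓ : satSet σ Γ)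
    (hA : ∀ l ∈ A, satLit σ l) {l : Lit} (h : UPC Γ A l) : satLit σ l := by
  induction h with
  | assm hl => exact hA _ hl
  | @prop C l hC _ _ ih =>
    obtain ⟨m, hm, hsm⟩ := hΓ C hC
    by_contra hl
    have hml : m ≠ l := fun h => hl (h ▸ hsm)
    exact satLit_neg_iff.mp (ih m hm hml) hsm

theorem upConflict.not_satSet {Γ : Set Clause} {A : Set Lit} (h : upConflict Γ A)
    {σ : Assignment} (hΓ : satSet σ Γ) (hA : ∀ l ∈ A, satLit σ l) : False := by
  obtain ⟨C, hC, hfalse⟩ := h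
  obtain ⟨m, hm, hsm⟩ := hΓ C hC
  exact satLit_neg_iff.mp ((hfalse m hm).satLit hΓ hA) hsm

theorem RUP.entails {Γ : Set Clause} {C : Clause} (h : RUP Γ C) : entails Γ C := by
  intro σ hΓ
  by_contra hC
  refine h.not_satSet hΓ ?_
  rintro _ ⟨m, hm, rfl⟩
  exact satLit_neg_iff.mpr fun hsm => hC ⟨m, hm, hsm⟩

theorem satSet_active_take {π : List Step} {σ : Assignment}
    (hσ : satSet σ (allassertedMono π))
    (hrup : ∀ i, ∀ hi : i < π.length, ∀ c : Clause,
      (π[i]'hi) = Step.rup c → entails (active (π.take i)) c)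
    (n : ℕ) : satSet σ (active (π.take n)) := by
  induction n using Nat.strong_induction_on with
  | _ n ih =>
    rintro c ⟨i, hi, hadd, -⟩
    have hin : i < n := lt_of_lt_of_le hi (List.length_take_le _ _)
    have hiπ : i < π.length := lt_of_lt_of_le hi (List.length_take_le' _ _)
    rw [List.getElem_take] at hadd
    rcases hadd with hasserted | hrupc
    · exact hσ c (show Step.asserted c ∈ π from hasserted ▸ List.getElem_mem hiπ)
    · exact hrup i hiπ c hrupc σ (ih i hin)

theorem mem_active_of_getLast {π : List Step} {c : Clause} (hne : π ≠ [])
    (hlast : π.getLast hne = Step.asserted c ∨ π.getLast hne = Step.rup c) :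
    c ∈ active π := by
  have hlen : 0 < π.length := List.length_pos_iff.mpr hne
  rw [List.getLast_eq_getElem] at hlast
  exact ⟨π.length - 1, by omega, hlast, fun k hk hik => by omega⟩

/-- a valid monolithic DRUP proof certifies that the set of all
asserted clauses is unsatisfiable. -/
theorem drup_sound (π : List Step) (h : validMono π) :
    ¬ ∃ σ : Assignment, satSet σ (allassertedMono π) := by
  rintro ⟨σ, hσ⟩
  obtain ⟨hv, hne, hlast⟩ := h
  have hactive : satSet σ (active π) := by
    simpa using satSet_active_take hσ (fun i hi c hc => (hv i hi c hc).entails) π.length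
  exact not_satClause_empty σ (hactive ∅ (mem_active_of_getLast hne hlast.symm))
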